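/- Left whiskering by a fixed 1-cell is functorial in F(X,h): for composable 2-cells α : M ⟶ M' and β : M' ⟶ M'' : A → B and a 1-cell N : B → C, one has (id_N ∘ α) ; (id_N ∘ β) = id_N ∘ (α ; β). -/
import Mathlib


/-! Syntax of the 2-λ-calculus over a 2-signature, following
"Cartesian closed 2-categories and permutation equivalence in
higher-order rewriting". -/

/-- Simple types over a set `S` of sorts: `A ::= s | 1 | A × B | B^A`
(`arr A B` denotes `B^A`). -/
inductive Ty (S : Type) : Type
  | base (s : S)
  | unit
  | prod (A B : Ty S)
  | arr (A B : Ty S)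

/-- A 1-signature over a fixed set `S` of sorts: operations with arities. -/
structure Sig1 (S : Type) : Type 1 where
  Op : Type
  opCtx : Op → List (Ty S)
  opTy : Op → Ty S

variable {S : Type}

/-- Raw λ-terms (de Bruijn indices) over a 1-signature.  Constant
application `const c args` applies an operation to a tuple of terms
(indices `≥ arity` are ignored by the typing rules). -/
inductive Tm (Sg : Sig1 S) : Type
  | var (n : ℕ)
  | unit
  | pair (M N : Tm Sg)
  | fst (M : Tm Sg)
  | snd (M : Tm Sg)
  | lam (A : Ty S) (M : Tm Sg)
  | app (M N : Tm Sg)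
  | const (c : Sg.Op) (args : ℕ → Tm Sg)

namespace Tm

variable {Sg : Sig1 S}

/-- Lift a renaming under a binder. -/
def liftRen (f : ℕ → ℕ) : ℕ → ℕ
  | 0 => 0
  | n + 1 => f n + 1

/-- Renaming of variables. -/
def ren (f : ℕ → ℕ) : Tm Sg → Tm Sg
  | var n => var (f n)
  | unit => unit
  | pair M N => pair (M.ren f) (N.ren f)
  | fst M => fst (M.ren f)
  | snd M => snd (M.ren f)
  | lam A M => lam A (M.ren (liftRen f))
  | app M N => app (M.ren f) (N.ren f)
  | const c a => const c (fun i => (a i).ren f)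

/-- Lift a simultaneous substitution under a binder. -/
def liftSub (σ : ℕ → Tm Sg) : ℕ → Tm Sg
  | 0 => var 0
  | n + 1 => (σ n).ren Nat.succ

/-- Simultaneous substitution. -/
def sub (σ : ℕ → Tm Sg) : Tm Sg → Tm Sg
  | var n => σ n
  | unit => unit
  | pair M N => pair (M.sub σ) (N.sub σ)
  | fst M => fst (M.sub σ)
  | snd M => snd (M.sub σ)
  | lam A M => lam A (M.sub (liftSub σ))
  | app M N => app (M.sub σ) (N.sub σ)
  | const c a => const c (fun i => (a i).sub σ)

/-- Extension of a substitution by a term (for substituting a single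
variable). -/
def cons (M : Tm Sg) (σ : ℕ → Tm Sg) : ℕ → Tm Sg
  | 0 => M
  | n + 1 => σ n

end Tm

/-- Typing judgement `Γ ⊢ M : A` for λ-terms. -/
inductive HasTy (Sg : Sig1 S) : List (Ty S) → Tm Sg → Ty S → Prop
  | var {Γ : List (Ty S)} {n : ℕ} (h : n < Γ.length) :
      HasTy Sg Γ (.var n) (Γ.get ⟨n, h⟩)
  | unit {Γ} : HasTy Sg Γ .unit .unit
  | pair {Γ M N A B} : HasTy Sg Γ M A → HasTy Sg Γ N B →
      HasTy Sg Γ (.pair M N) (.prod A B)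
  | fst {Γ M A B} : HasTy Sg Γ M (.prod A B) → HasTy Sg Γ (.fst M) A
  | snd {Γ M A B} : HasTy Sg Γ M (.prod A B) → HasTy Sg Γ (.snd M) B
  | lam {Γ M A B} : HasTy Sg (A :: Γ) M B → HasTy Sg Γ (.lam A M) (.arr A B)
  | app {Γ M N A B} : HasTy Sg Γ M (.arr A B) → HasTy Sg Γ N A →
      HasTy Sg Γ (.app M N) B
  | const {Γ} {c : Sg.Op} {args : ℕ → Tm Sg}
      (h : ∀ i (hi : i < (Sg.opCtx c).length),
        HasTy Sg Γ (args i) ((Sg.opCtx c).get ⟨i, hi⟩)) :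
      HasTy Sg Γ (.const c args) (Sg.opTy c)

/-- βη-equivalence of well-typed λ-terms. -/
inductive Beq (Sg : Sig1 S) : List (Ty S) → Tm Sg → Tm Sg → Ty S → Prop
  | refl {Γ M A} : HasTy Sg Γ M A → Beq Sg Γ M M A
  | symm {Γ M N A} : Beq Sg Γ M N A → Beq Sg Γ N M A
  | trans {Γ M N P A} : Beq Sg Γ M N A → Beq Sg Γ N P A → Beq Sg Γ M P A
  | pairCong {Γ M M' N N' A B} : Beq Sg Γ M M' A → Beq Sg Γ N N' B →
      Beq Sg Γ (.pair M N) (.pair M' N') (.prod A B)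
  | fstCong {Γ M M' A B} : Beq Sg Γ M M' (.prod A B) →
      Beq Sg Γ (.fst M) (.fst M') A
  | sndCong {Γ M M' A B} : Beq Sg Γ M M' (.prod A B) →
      Beq Sg Γ (.snd M) (.snd M') B
  | lamCong {Γ M M' A B} : Beq Sg (A :: Γ) M M' B →
      Beq Sg Γ (.lam A M) (.lam A M') (.arr A B)
  | appCong {Γ M M' N N' A B} : Beq Sg Γ M M' (.arr A B) → Beq Sg Γ N N' A →
      Beq Sg Γ (.app M N) (.app M' N') B
  | constCong {Γ} {c : Sg.Op} {args args' : ℕ → Tm Sg}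
      (h : ∀ i (hi : i < (Sg.opCtx c).length),
        Beq Sg Γ (args i) (args' i) ((Sg.opCtx c).get ⟨i, hi⟩)) :
      Beq Sg Γ (.const c args) (.const c args') (Sg.opTy c)
  | beta {Γ M N A B} : HasTy Sg (A :: Γ) M B → HasTy Sg Γ N A →
      Beq Sg Γ (.app (.lam A M) N) (M.sub (Tm.cons N .var)) B
  | eta {Γ M A B} : HasTy Sg Γ M (.arr A B) →
      Beq Sg Γ M (.lam A (.app (M.ren Nat.succ) (.var 0))) (.arr A B)
  | prodBeta1 {Γ M N A B} : HasTy Sg Γ M A → HasTy Sg Γ N B →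
      Beq Sg Γ (.fst (.pair M N)) M A
  | prodBeta2 {Γ M N A B} : HasTy Sg Γ M A → HasTy Sg Γ N B →
      Beq Sg Γ (.snd (.pair M N)) N B
  | prodEta {Γ M A B} : HasTy Sg Γ M (.prod A B) →
      Beq Sg Γ M (.pair (.fst M) (.snd M)) (.prod A B)
  | unitEta {Γ M} : HasTy Sg Γ M .unit → Beq Sg Γ M .unit .unit

/-- A 2-signature: a 1-signature together with a set of reduction rules
between parallel terms. -/
structure Sig2 (S : Type) : Type 1 where
  sig : Sig1 S
  Rule : Type
  ruleCtx : Rule → List (Ty S)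
  ruleTy : Rule → Ty S
  lhs : Rule → Tm sig
  rhs : Rule → Tm sig

/-- Raw reduction terms ("proof terms") over a 1-signature `Sg` and a set `R`
of reduction-rule names.  `vcomp P M Q` is the vertical composite
`P ;_M Q`. -/
inductive Rd (Sg : Sig1 S) (R : Type) : Type
  | var (n : ℕ)
  | unit
  | pair (P Q : Rd Sg R)
  | fst (P : Rd Sg R)
  | snd (P : Rd Sg R)
  | lam (A : Ty S) (P : Rd Sg R)
  | app (P Q : Rd Sg R)
  | const (c : Sg.Op) (args : ℕ → Rd Sg R)
  | rule (r : R) (args : ℕ → Rd Sg R)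
  | vcomp (P : Rd Sg R) (M : Tm Sg) (Q : Rd Sg R)

namespace Rd

variable {Sg : Sig1 S} {R R' : Type}

/-- Every term is an identity reduction on itself. -/
def toRd : Tm Sg → Rd Sg R
  | .var n => var n
  | .unit => unit
  | .pair M N => pair (toRd M) (toRd N)
  | .fst M => fst (toRd M)
  | .snd M => snd (toRd M)
  | .lam A M => lam A (toRd M)
  | .app M N => app (toRd M) (toRd N)
  | .const c a => const c (fun i => toRd (a i))

/-- Renaming of variables in reductions. -/
def ren (f : ℕ → ℕ) : Rd Sg R → Rd Sg R
  | var n => var (f n)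
  | unit => unit
  | pair P Q => pair (P.ren f) (Q.ren f)
  | fst P => fst (P.ren f)
  | snd P => snd (P.ren f)
  | lam A P => lam A (P.ren (Tm.liftRen f))
  | app P Q => app (P.ren f) (Q.ren f)
  | const c a => const c (fun i => (a i).ren f)
  | rule r a => rule r (fun i => (a i).ren f)
  | vcomp P M Q => vcomp (P.ren f) (M.ren f) (Q.ren f)

/-- Relabelling of rule names in a reduction. -/
def mapRule (g : R → R') : Rd Sg R → Rd Sg R'
  | var n => var n
  | unit => unit
  | pair P Q => pair (P.mapRule g) (Q.mapRule g)
  | fst P => fst (P.mapRule g)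
  | snd P => snd (P.mapRule g)
  | lam A P => lam A (P.mapRule g)
  | app P Q => app (P.mapRule g) (Q.mapRule g)
  | const c a => const c (fun i => (a i).mapRule g)
  | rule r a => rule (g r) (fun i => (a i).mapRule g)
  | vcomp P M Q => vcomp (P.mapRule g) M (Q.mapRule g)

/-- Lift a tuple of reductions under a binder. -/
def liftRd (Q : ℕ → Rd Sg R) : ℕ → Rd Sg R
  | 0 => var 0
  | n + 1 => (Q n).ren Nat.succ

/-- Extension of a tuple of reductions by a reduction. -/
def consRd (P : Rd Sg R) (τ : ℕ → Rd Sg R) : ℕ → Rd Sg R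
  | 0 => P
  | n + 1 => τ n

end Rd

/-- Left whiskering `M[Q]` of a term `M` by a tuple of reductions `Q`. -/
def lw {Sg : Sig1 S} {R : Type} (Q : ℕ → Rd Sg R) : Tm Sg → Rd Sg R
  | .var n => Q n
  | .unit => .unit
  | .pair M N => .pair (lw Q M) (lw Q N)
  | .fst M => .fst (lw Q M)
  | .snd M => .snd (lw Q M)
  | .lam A M => .lam A (lw (Rd.liftRd Q) M)
  | .app M N => .app (lw Q M) (lw Q N)
  | .const c a => .const c (fun i => lw Q (a i))

/-- Right whiskering `P[N]` of a reduction `P` by a tuple of terms `N`. -/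
def rw {Sg : Sig1 S} {R : Type} (N : ℕ → Tm Sg) : Rd Sg R → Rd Sg R
  | .var n => Rd.toRd (N n)
  | .unit => .unit
  | .pair P Q => .pair (rw N P) (rw N Q)
  | .fst P => .fst (rw N P)
  | .snd P => .snd (rw N P)
  | .lam A P => .lam A (rw (Tm.liftSub N) P)
  | .app P Q => .app (rw N P) (rw N Q)
  | .const c a => .const c (fun i => rw N (a i))
  | .rule r a => .rule r (fun i => rw N (a i))
  | .vcomp P M Q => .vcomp (rw N P) (M.sub N) (rw N Q)

/-- Substitution of a tuple of reductions `Q : N ⟶ N'` into a reduction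
`P : M ⟶ M'`, defined as `P[N] ;_{M'[N]} M'[Q]`. -/
def rdSub {Sg : Sig1 S} {R : Type} (P : Rd Sg R) (N : ℕ → Tm Sg) (M' : Tm Sg)
    (Q : ℕ → Rd Sg R) : Rd Sg R :=
  .vcomp (rw N P) (M'.sub N) (lw Q M')

/-- The typing judgement `Γ ⊢ P : M ⟶ N : A` for reductions. -/
inductive RdJ (X : Sig2 S) : List (Ty S) → Rd X.sig X.Rule → Tm X.sig → Tm X.sig → Ty S → Prop
  | rule {Γ} {r : X.Rule} {args : ℕ → Rd X.sig X.Rule} {Ms Ns : ℕ → Tm X.sig}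
      (h : ∀ i (hi : i < (X.ruleCtx r).length),
        RdJ X Γ (args i) (Ms i) (Ns i) ((X.ruleCtx r).get ⟨i, hi⟩)) :
      RdJ X Γ (.rule r args) ((X.lhs r).sub Ms) ((X.rhs r).sub Ns) (X.ruleTy r)
  | vcomp {Γ P Q M₁ M₂ M₃ A} : RdJ X Γ P M₁ M₂ A → RdJ X Γ Q M₂ M₃ A →
      RdJ X Γ (.vcomp P M₂ Q) M₁ M₃ A
  | var {Γ : List (Ty S)} {n : ℕ} (h : n < Γ.length) :
      RdJ X Γ (.var n) (.var n) (.var n) (Γ.get ⟨n, h⟩)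
  | unit {Γ} : RdJ X Γ .unit .unit .unit .unit
  | const {Γ} {c : X.sig.Op} {args : ℕ → Rd X.sig X.Rule} {Ms Ns : ℕ → Tm X.sig}
      (h : ∀ i (hi : i < (X.sig.opCtx c).length),
        RdJ X Γ (args i) (Ms i) (Ns i) ((X.sig.opCtx c).get ⟨i, hi⟩)) :
      RdJ X Γ (.const c args) (.const c Ms) (.const c Ns) (X.sig.opTy c)
  | lam {Γ P M N A B} : RdJ X (A :: Γ) P M N B →
      RdJ X Γ (.lam A P) (.lam A M) (.lam A N) (.arr A B)
  | app {Γ P Q M M' N N' A B} : RdJ X Γ P M M' (.arr A B) → RdJ X Γ Q N N' A →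
      RdJ X Γ (.app P Q) (.app M N) (.app M' N') B
  | pair {Γ P Q M M' N N' A B} : RdJ X Γ P M M' A → RdJ X Γ Q N N' B →
      RdJ X Γ (.pair P Q) (.pair M N) (.pair M' N') (.prod A B)
  | fst {Γ P M N A B} : RdJ X Γ P M N (.prod A B) →
      RdJ X Γ (.fst P) (.fst M) (.fst N) A
  | snd {Γ P M N A B} : RdJ X Γ P M N (.prod A B) →
      RdJ X Γ (.snd P) (.snd M) (.snd N) B
  | conv {Γ P M N M' N' A} : RdJ X Γ P M N A → Beq X.sig Γ M M' A →
      Beq X.sig Γ N N' A → RdJ X Γ P M' N' A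
/-- Permutation equivalence `Γ ⊢ P ≡ Q : M ⟶ N : A` on reductions:
the congruence generated by the category laws for vertical composition,
β/η-rules at the level of reductions, and the lifting rules. -/
inductive PEq (X : Sig2 S) : List (Ty S) → Rd X.sig X.Rule → Rd X.sig X.Rule → Tm X.sig → Tm X.sig → Ty S → Prop
  -- congruence rules
  | refl {Γ P M N A} : RdJ X Γ P M N A → PEq X Γ P P M N A
  | symm {Γ P Q M N A} : PEq X Γ P Q M N A → PEq X Γ Q P M N A
  | trans {Γ P Q R₀ M N A} : PEq X Γ P Q M N A → PEq X Γ Q R₀ M N A →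
      PEq X Γ P R₀ M N A
  | vcompCong {Γ P P' Q Q' M₁ M₂ M₃ A} : PEq X Γ P P' M₁ M₂ A →
      PEq X Γ Q Q' M₂ M₃ A →
      PEq X Γ (.vcomp P M₂ Q) (.vcomp P' M₂ Q') M₁ M₃ A
  | ruleCong {Γ} {r : X.Rule} {P Q : ℕ → Rd X.sig X.Rule} {Ms Ns : ℕ → Tm X.sig}
      (h : ∀ i (hi : i < (X.ruleCtx r).length),
        PEq X Γ (P i) (Q i) (Ms i) (Ns i) ((X.ruleCtx r).get ⟨i, hi⟩)) :
      PEq X Γ (.rule r P) (.rule r Q) ((X.lhs r).sub Ms) ((X.rhs r).sub Ns) (X.ruleTy r)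
  | constCong {Γ} {c : X.sig.Op} {P Q : ℕ → Rd X.sig X.Rule} {Ms Ns : ℕ → Tm X.sig}
      (h : ∀ i (hi : i < (X.sig.opCtx c).length),
        PEq X Γ (P i) (Q i) (Ms i) (Ns i) ((X.sig.opCtx c).get ⟨i, hi⟩)) :
      PEq X Γ (.const c P) (.const c Q) (.const c Ms) (.const c Ns) (X.sig.opTy c)
  | lamCong {Γ P Q M N A B} : PEq X (A :: Γ) P Q M N B →
      PEq X Γ (.lam A P) (.lam A Q) (.lam A M) (.lam A N) (.arr A B)
  | appCong {Γ P P' Q Q' M M' N N' A B} : PEq X Γ P P' M M' (.arr A B) →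
      PEq X Γ Q Q' N N' A →
      PEq X Γ (.app P Q) (.app P' Q') (.app M N) (.app M' N') B
  | pairCong {Γ P P' Q Q' M M' N N' A B} : PEq X Γ P P' M M' A →
      PEq X Γ Q Q' N N' B →
      PEq X Γ (.pair P Q) (.pair P' Q') (.pair M N) (.pair M' N') (.prod A B)
  | fstCong {Γ P Q M N A B} : PEq X Γ P Q M N (.prod A B) →
      PEq X Γ (.fst P) (.fst Q) (.fst M) (.fst N) A
  | sndCong {Γ P Q M N A B} : PEq X Γ P Q M N (.prod A B) →
      PEq X Γ (.snd P) (.snd Q) (.snd M) (.snd N) B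
  -- category rules
  | assoc {Γ P₁ P₂ P₃ M₁ M₂ M₃ M₄ A} : RdJ X Γ P₁ M₁ M₂ A → RdJ X Γ P₂ M₂ M₃ A →
      RdJ X Γ P₃ M₃ M₄ A →
      PEq X Γ (.vcomp P₁ M₂ (.vcomp P₂ M₃ P₃)) (.vcomp (.vcomp P₁ M₂ P₂) M₃ P₃) M₁ M₄ A
  | unitR {Γ P M N A} : RdJ X Γ P M N A →
      PEq X Γ (.vcomp P N (Rd.toRd N)) P M N A
  | unitL {Γ P M N A} : RdJ X Γ P M N A →
      PEq X Γ (.vcomp (Rd.toRd M) M P) P M N A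
  -- beta and eta rules
  | beta {Γ P Q M M' N N' A B} : RdJ X (A :: Γ) P M M' B → RdJ X Γ Q N N' A →
      PEq X Γ (.app (.lam A P) Q)
        (rdSub P (Tm.cons N Tm.var) M' (Rd.consRd Q (fun n => Rd.var n)))
        (.app (.lam A M) N) (M'.sub (Tm.cons N' Tm.var)) B
  | eta {Γ P M N A B} : RdJ X Γ P M N (.arr A B) →
      PEq X Γ P (.lam A (.app (P.ren Nat.succ) (.var 0))) M N (.arr A B)
  | fstPair {Γ P Q M₁ M₂ N₁ N₂ A B} : RdJ X Γ P M₁ M₂ A → RdJ X Γ Q N₁ N₂ B →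
      PEq X Γ (.fst (.pair P Q)) P (.fst (.pair M₁ N₁)) M₂ A
  | sndPair {Γ P Q M₁ M₂ N₁ N₂ A B} : RdJ X Γ P M₁ M₂ A → RdJ X Γ Q N₁ N₂ B →
      PEq X Γ (.snd (.pair P Q)) Q (.snd (.pair M₁ N₁)) N₂ B
  | pairEta {Γ P M₁ M₂ N₁ N₂ A B} : RdJ X Γ P (.pair M₁ N₁) (.pair M₂ N₂) (.prod A B) →
      PEq X Γ P (.pair (.fst P) (.snd P)) (.pair M₁ N₁) (.pair M₂ N₂) (.prod A B)
  | unitEta {Γ P M N} : RdJ X Γ P M N .unit → PEq X Γ P .unit M N .unit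
  -- lifting rules
  | ruleLift1 {Δ} {r : X.Rule} {P Q : ℕ → Rd X.sig X.Rule} {N₁ N₂ N₃ : ℕ → Tm X.sig}
      (hP : ∀ i (hi : i < (X.ruleCtx r).length),
        RdJ X Δ (P i) (N₁ i) (N₂ i) ((X.ruleCtx r).get ⟨i, hi⟩))
      (hQ : ∀ i (hi : i < (X.ruleCtx r).length),
        RdJ X Δ (Q i) (N₂ i) (N₃ i) ((X.ruleCtx r).get ⟨i, hi⟩)) :
      PEq X Δ (.rule r (fun i => .vcomp (P i) (N₂ i) (Q i)))
        (.vcomp (lw P (X.lhs r)) ((X.lhs r).sub N₂) (.rule r Q))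
        ((X.lhs r).sub N₁) ((X.rhs r).sub N₃) (X.ruleTy r)
  | ruleLift2 {Δ} {r : X.Rule} {P Q : ℕ → Rd X.sig X.Rule} {N₁ N₂ N₃ : ℕ → Tm X.sig}
      (hP : ∀ i (hi : i < (X.ruleCtx r).length),
        RdJ X Δ (P i) (N₁ i) (N₂ i) ((X.ruleCtx r).get ⟨i, hi⟩))
      (hQ : ∀ i (hi : i < (X.ruleCtx r).length),
        RdJ X Δ (Q i) (N₂ i) (N₃ i) ((X.ruleCtx r).get ⟨i, hi⟩)) :
      PEq X Δ (.rule r (fun i => .vcomp (P i) (N₂ i) (Q i)))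
        (.vcomp (.rule r P) ((X.rhs r).sub N₂) (lw Q (X.rhs r)))
        ((X.lhs r).sub N₁) ((X.rhs r).sub N₃) (X.ruleTy r)
  | constLift {Γ} {c : X.sig.Op} {P Q : ℕ → Rd X.sig X.Rule} {M₁ M₂ M₃ : ℕ → Tm X.sig}
      (hP : ∀ i (hi : i < (X.sig.opCtx c).length),
        RdJ X Γ (P i) (M₁ i) (M₂ i) ((X.sig.opCtx c).get ⟨i, hi⟩))
      (hQ : ∀ i (hi : i < (X.sig.opCtx c).length),
        RdJ X Γ (Q i) (M₂ i) (M₃ i) ((X.sig.opCtx c).get ⟨i, hi⟩)) :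
      PEq X Γ (.const c (fun i => .vcomp (P i) (M₂ i) (Q i)))
        (.vcomp (.const c P) (.const c M₂) (.const c Q))
        (.const c M₁) (.const c M₃) (X.sig.opTy c)
  | lamLift {Γ P Q M₁ M₂ M₃ A B} : RdJ X (A :: Γ) P M₁ M₂ B →
      RdJ X (A :: Γ) Q M₂ M₃ B →
      PEq X Γ (.lam A (.vcomp P M₂ Q))
        (.vcomp (.lam A P) (.lam A M₂) (.lam A Q))
        (.lam A M₁) (.lam A M₃) (.arr A B)
  | appLift {Γ P P' Q Q' M₁ M₂ M₃ N₁ N₂ N₃ A B} :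
      RdJ X Γ P M₁ M₂ (.arr A B) → RdJ X Γ P' M₂ M₃ (.arr A B) →
      RdJ X Γ Q N₁ N₂ A → RdJ X Γ Q' N₂ N₃ A →
      PEq X Γ (.app (.vcomp P M₂ P') (.vcomp Q N₂ Q'))
        (.vcomp (.app P Q) (.app M₂ N₂) (.app P' Q'))
        (.app M₁ N₁) (.app M₃ N₃) B
  | pairLift {Γ P P' Q Q' M₁ M₂ M₃ N₁ N₂ N₃ A B} :
      RdJ X Γ P M₁ M₂ A → RdJ X Γ P' M₂ M₃ A →
      RdJ X Γ Q N₁ N₂ B → RdJ X Γ Q' N₂ N₃ B →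
      PEq X Γ (.pair (.vcomp P M₂ P') (.vcomp Q N₂ Q'))
        (.vcomp (.pair P Q) (.pair M₂ N₂) (.pair P' Q'))
        (.pair M₁ N₁) (.pair M₃ N₃) (.prod A B)
  | fstLift {Γ P Q M₁ M₂ M₃ A B} : RdJ X Γ P M₁ M₂ (.prod A B) →
      RdJ X Γ Q M₂ M₃ (.prod A B) →
      PEq X Γ (.fst (.vcomp P M₂ Q)) (.vcomp (.fst P) (.fst M₂) (.fst Q))
        (.fst M₁) (.fst M₃) A
  | sndLift {Γ P Q M₁ M₂ M₃ A B} : RdJ X Γ P M₁ M₂ (.prod A B) →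
      RdJ X Γ Q M₂ M₃ (.prod A B) →
      PEq X Γ (.snd (.vcomp P M₂ Q)) (.vcomp (.snd P) (.snd M₂) (.snd Q))
        (.snd M₁) (.snd M₃) B
  -- endpoints are βη-classes
  | conv {Γ P Q M N M' N' A} : PEq X Γ P Q M N A → Beq X.sig Γ M M' A →
      Beq X.sig Γ N N' A → PEq X Γ P Q M' N' A
/-- The rules of the 2-signature `L X`: reductions over `X` together with
their boundary (which the paper takes modulo permutation equivalence). -/
structure LRule (X : Sig2 S) : Type where
  ctx : List (Ty S)
  red : Rd X.sig X.Rule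
  src : Tm X.sig
  tgt : Tm X.sig
  ty : Ty S

/-- The 2-signature `L X`: same sorts and operations as `X`, and with
reduction rules the reductions over `X`. -/
def LSig (X : Sig2 S) : Sig2 S where
  sig := X.sig
  Rule := LRule X
  ruleCtx := LRule.ctx
  ruleTy := LRule.ty
  lhs := LRule.src
  rhs := LRule.tgt

/-- Source endpoint of a raw reduction. -/
def srcRd (X : Sig2 S) : Rd X.sig X.Rule → Tm X.sig
  | .var n => .var n
  | .unit => .unit
  | .pair P Q => .pair (srcRd X P) (srcRd X Q)
  | .fst P => .fst (srcRd X P)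
  | .snd P => .snd (srcRd X P)
  | .lam A P => .lam A (srcRd X P)
  | .app P Q => .app (srcRd X P) (srcRd X Q)
  | .const c a => .const c (fun i => srcRd X (a i))
  | .rule r a => (X.lhs r).sub (fun i => srcRd X (a i))
  | .vcomp P _ _ => srcRd X P

/-- Target endpoint of a raw reduction. -/
def tgtRd (X : Sig2 S) : Rd X.sig X.Rule → Tm X.sig
  | .var n => .var n
  | .unit => .unit
  | .pair P Q => .pair (tgtRd X P) (tgtRd X Q)
  | .fst P => .fst (tgtRd X P)
  | .snd P => .snd (tgtRd X P)
  | .lam A P => .lam A (tgtRd X P)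
  | .app P Q => .app (tgtRd X P) (tgtRd X Q)
  | .const c a => .const c (fun i => tgtRd X (a i))
  | .rule r a => (X.rhs r).sub (fun i => tgtRd X (a i))
  | .vcomp _ _ Q => tgtRd X Q

/-- The multiplication `μ_X : L (L X) → L X` on reductions: a rule
application `R⟨P₁,…,Pₙ⟩` is interpreted as the substitution `R[μP₁,…,μPₙ]`,
and `μ` commutes with all the other constructors. -/
def mu (X : Sig2 S) : Rd X.sig (LRule X) → Rd X.sig X.Rule
  | .var n => .var n
  | .unit => .unit
  | .pair P Q => .pair (mu X P) (mu X Q)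
  | .fst P => .fst (mu X P)
  | .snd P => .snd (mu X P)
  | .lam A P => .lam A (mu X P)
  | .app P Q => .app (mu X P) (mu X Q)
  | .const c a => .const c (fun i => mu X (a i))
  | .rule Rr a => rdSub Rr.red (fun i => srcRd X (mu X (a i))) Rr.tgt (fun i => mu X (a i))
  | .vcomp P M Q => .vcomp (mu X P) M (mu X Q)

/-- The unit `η` on reductions: `r ↦ r⟨x₁,…,xₙ⟩`. -/
def etaRd (X : Sig2 S) (r : X.Rule) : Rd X.sig X.Rule :=
  .rule r (fun i => .var i)

/-- The unit `η_X : X → L X` on rules. -/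
def etaRule (X : Sig2 S) (r : X.Rule) : LRule X :=
  ⟨X.ruleCtx r, etaRd X r, X.lhs r, X.rhs r, X.ruleTy r⟩

/-- The rule component of `μ_X : L (L X) → L X`. -/
def muRule (X : Sig2 S) (R₀ : LRule (LSig X)) : LRule X :=
  ⟨R₀.ctx, mu X R₀.red, R₀.src, R₀.tgt, R₀.ty⟩
/-! ### Auxiliary lemmas -/

namespace Tm

variable {Sg : Sig1 S}

theorem liftRen_liftRen (f g : ℕ → ℕ) (n : ℕ) :
    liftRen g (liftRen f n) = liftRen (fun k => g (f k)) n := by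
  cases n <;> rfl

theorem ren_ren (M : Tm Sg) (f g : ℕ → ℕ) :
    (M.ren f).ren g = M.ren (fun n => g (f n)) := by
  induction M generalizing f g with
  | var n => rfl
  | unit => rfl
  | pair M N ih1 ih2 => simp only [ren, ih1, ih2]
  | fst M ih => simp only [ren, ih]
  | snd M ih => simp only [ren, ih]
  | lam A M ih =>
      simp only [ren, ih]
      have e : (fun n => liftRen g (liftRen f n)) = liftRen (fun k => g (f k)) :=
        funext fun n => liftRen_liftRen f g n
      rw [e]
  | app M N ih1 ih2 => simp only [ren, ih1, ih2]
  | const c a ih =>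
      simp only [ren]
      congr 1
      funext i
      exact ih i f g

theorem liftSub_var : liftSub (Sg := Sg) var = var := by
  funext n
  cases n <;> rfl

theorem sub_id (M : Tm Sg) : M.sub var = M := by
  induction M with
  | var n => rfl
  | unit => rfl
  | pair M N ih1 ih2 => simp only [sub, ih1, ih2]
  | fst M ih => simp only [sub, ih]
  | snd M ih => simp only [sub, ih]
  | lam A M ih => simp only [sub, liftSub_var, ih]
  | app M N ih1 ih2 => simp only [sub, ih1, ih2]
  | const c a ih =>
      simp only [sub]
      congr 1
      funext i
      exact ih i

theorem liftSub_ren (σ : ℕ → Tm Sg) (f : ℕ → ℕ) (n : ℕ) :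
    (liftSub σ n).ren (liftRen f) = liftSub (fun k => (σ k).ren f) n := by
  cases n with
  | zero => rfl
  | succ n =>
      simp only [liftSub, ren_ren]
      congr 1

theorem ren_sub (M : Tm Sg) (σ : ℕ → Tm Sg) (f : ℕ → ℕ) :
    (M.sub σ).ren f = M.sub (fun n => (σ n).ren f) := by
  induction M generalizing σ f with
  | var n => rfl
  | unit => rfl
  | pair M N ih1 ih2 => simp only [sub, ren, ih1, ih2]
  | fst M ih => simp only [sub, ren, ih]
  | snd M ih => simp only [sub, ren, ih]
  | lam A M ih =>
      simp only [sub, ren, ih]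
      have e : (fun n => (liftSub σ n).ren (liftRen f)) = liftSub (fun k => (σ k).ren f) :=
        funext fun n => liftSub_ren σ f n
      rw [e]
  | app M N ih1 ih2 => simp only [sub, ren, ih1, ih2]
  | const c a ih =>
      simp only [sub, ren]
      congr 1
      funext i
      exact ih i σ f

theorem liftSub_liftRen (σ : ℕ → Tm Sg) (f : ℕ → ℕ) (n : ℕ) :
    liftSub σ (liftRen f n) = liftSub (fun k => σ (f k)) n := by
  cases n <;> rfl

theorem sub_ren (M : Tm Sg) (f : ℕ → ℕ) (σ : ℕ → Tm Sg) :
    (M.ren f).sub σ = M.sub (fun n => σ (f n)) := by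
  induction M generalizing σ f with
  | var n => rfl
  | unit => rfl
  | pair M N ih1 ih2 => simp only [sub, ren, ih1, ih2]
  | fst M ih => simp only [sub, ren, ih]
  | snd M ih => simp only [sub, ren, ih]
  | lam A M ih =>
      simp only [sub, ren, ih]
      have e : (fun n => liftSub σ (liftRen f n)) = liftSub (fun k => σ (f k)) :=
        funext fun n => liftSub_liftRen σ f n
      rw [e]
  | app M N ih1 ih2 => simp only [sub, ren, ih1, ih2]
  | const c a ih =>
      simp only [sub, ren]
      congr 1
      funext i
      exact ih i f σ

theorem ren_sub_cons (M N : Tm Sg) (f : ℕ → ℕ) :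
    (M.sub (cons N var)).ren f
      = (M.ren (liftRen f)).sub (cons (N.ren f) var) := by
  rw [ren_sub, sub_ren]
  congr 1
  funext n
  cases n <;> rfl

end Tm

namespace Rd

variable {Sg : Sig1 S} {R : Type}

theorem ren_ren (P : Rd Sg R) (f g : ℕ → ℕ) :
    (P.ren f).ren g = P.ren (fun n => g (f n)) := by
  induction P generalizing f g with
  | var n => rfl
  | unit => rfl
  | pair P Q ih1 ih2 => simp only [ren, ih1, ih2]
  | fst P ih => simp only [ren, ih]
  | snd P ih => simp only [ren, ih]
  | lam A P ih =>
      simp only [ren, ih]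
      have e : (fun n => Tm.liftRen g (Tm.liftRen f n)) = Tm.liftRen (fun k => g (f k)) :=
        funext fun n => Tm.liftRen_liftRen f g n
      rw [e]
  | app P Q ih1 ih2 => simp only [ren, ih1, ih2]
  | const c a ih =>
      simp only [ren]
      congr 1
      funext i
      exact ih i f g
  | rule r a ih =>
      simp only [ren]
      congr 1
      funext i
      exact ih i f g
  | vcomp P M Q ih1 ih2 =>
      simp only [ren, ih1, ih2, Tm.ren_ren]

theorem toRd_ren (M : Tm Sg) (f : ℕ → ℕ) :
    (toRd M : Rd Sg R).ren f = toRd (M.ren f) := by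
  induction M generalizing f with
  | var n => rfl
  | unit => rfl
  | pair M N ih1 ih2 => simp only [toRd, Tm.ren, ren, ih1, ih2]
  | fst M ih => simp only [toRd, Tm.ren, ren, ih]
  | snd M ih => simp only [toRd, Tm.ren, ren, ih]
  | lam A M ih => simp only [toRd, Tm.ren, ren, ih]
  | app M N ih1 ih2 => simp only [toRd, Tm.ren, ren, ih1, ih2]
  | const c a ih =>
      simp only [toRd, Tm.ren, ren]
      congr 1
      funext i
      exact ih i f

theorem liftRd_var : liftRd (Sg := Sg) (R := R) (fun n => var n) = fun n => var n := by
  funext n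
  cases n <;> rfl

theorem liftRd_ren (Q : ℕ → Rd Sg R) (f : ℕ → ℕ) (n : ℕ) :
    (liftRd Q n).ren (Tm.liftRen f) = liftRd (fun k => (Q k).ren f) n := by
  cases n with
  | zero => rfl
  | succ n =>
      simp only [liftRd, ren_ren]
      congr 1

theorem liftRd_liftRen (Q : ℕ → Rd Sg R) (f : ℕ → ℕ) (n : ℕ) :
    liftRd Q (Tm.liftRen f n) = liftRd (fun k => Q (f k)) n := by
  cases n <;> rfl

end Rd

section LwRw

variable {Sg : Sig1 S} {R : Type}

theorem rw_id (P : Rd Sg R) : rw Tm.var P = P := by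
  induction P with
  | var n => rfl
  | unit => rfl
  | pair P Q ih1 ih2 => simp only [rw, ih1, ih2]
  | fst P ih => simp only [rw, ih]
  | snd P ih => simp only [rw, ih]
  | lam A P ih => simp only [rw, Tm.liftSub_var, ih]
  | app P Q ih1 ih2 => simp only [rw, ih1, ih2]
  | const c a ih =>
      simp only [rw]
      congr 1
      funext i
      exact ih i
  | rule r a ih =>
      simp only [rw]
      congr 1
      funext i
      exact ih i
  | vcomp P M Q ih1 ih2 => simp only [rw, ih1, ih2, Tm.sub_id]

theorem lw_var (M : Tm Sg) : lw (fun n => Rd.var n) M = (Rd.toRd M : Rd Sg R) := by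
  induction M with
  | var n => rfl
  | unit => rfl
  | pair M N ih1 ih2 => simp only [lw, Rd.toRd, ih1, ih2]
  | fst M ih => simp only [lw, Rd.toRd, ih]
  | snd M ih => simp only [lw, Rd.toRd, ih]
  | lam A M ih => simp only [lw, Rd.toRd, Rd.liftRd_var, ih]
  | app M N ih1 ih2 => simp only [lw, Rd.toRd, ih1, ih2]
  | const c a ih =>
      simp only [lw, Rd.toRd]
      congr 1
      funext i
      exact ih i

theorem rw_toRd (M : Tm Sg) (σ : ℕ → Tm Sg) :
    rw σ (Rd.toRd M : Rd Sg R) = Rd.toRd (M.sub σ) := by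
  induction M generalizing σ with
  | var n => rfl
  | unit => rfl
  | pair M N ih1 ih2 => simp only [Rd.toRd, Tm.sub, rw, ih1, ih2]
  | fst M ih => simp only [Rd.toRd, Tm.sub, rw, ih]
  | snd M ih => simp only [Rd.toRd, Tm.sub, rw, ih]
  | lam A M ih => simp only [Rd.toRd, Tm.sub, rw, ih]
  | app M N ih1 ih2 => simp only [Rd.toRd, Tm.sub, rw, ih1, ih2]
  | const c a ih =>
      simp only [Rd.toRd, Tm.sub, rw]
      congr 1
      funext i
      exact ih i σ

theorem ren_rw (P : Rd Sg R) (σ : ℕ → Tm Sg) (f : ℕ → ℕ) :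
    (rw σ P).ren f = rw (fun n => (σ n).ren f) P := by
  induction P generalizing σ f with
  | var n => simp only [rw, Rd.toRd_ren]
  | unit => rfl
  | pair P Q ih1 ih2 => simp only [rw, Rd.ren, ih1, ih2]
  | fst P ih => simp only [rw, Rd.ren, ih]
  | snd P ih => simp only [rw, Rd.ren, ih]
  | lam A P ih =>
      simp only [rw, Rd.ren, ih]
      have e : (fun n => (Tm.liftSub σ n).ren (Tm.liftRen f)) = Tm.liftSub (fun k => (σ k).ren f) :=
        funext fun n => Tm.liftSub_ren σ f n
      rw [e]
  | app P Q ih1 ih2 => simp only [rw, Rd.ren, ih1, ih2]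
  | const c a ih =>
      simp only [rw, Rd.ren]
      congr 1
      funext i
      exact ih i σ f
  | rule r a ih =>
      simp only [rw, Rd.ren]
      congr 1
      funext i
      exact ih i σ f
  | vcomp P M Q ih1 ih2 =>
      simp only [rw, Rd.ren, ih1, ih2, Tm.ren_sub]

theorem rw_ren (P : Rd Sg R) (f : ℕ → ℕ) (σ : ℕ → Tm Sg) :
    rw σ (P.ren f) = rw (fun n => σ (f n)) P := by
  induction P generalizing σ f with
  | var n => rfl
  | unit => rfl
  | pair P Q ih1 ih2 => simp only [rw, Rd.ren, ih1, ih2]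
  | fst P ih => simp only [rw, Rd.ren, ih]
  | snd P ih => simp only [rw, Rd.ren, ih]
  | lam A P ih =>
      simp only [rw, Rd.ren, ih]
      have e : (fun n => Tm.liftSub σ (Tm.liftRen f n)) = Tm.liftSub (fun k => σ (f k)) :=
        funext fun n => Tm.liftSub_liftRen σ f n
      rw [e]
  | app P Q ih1 ih2 => simp only [rw, Rd.ren, ih1, ih2]
  | const c a ih =>
      simp only [rw, Rd.ren]
      congr 1
      funext i
      exact ih i f σ
  | rule r a ih =>
      simp only [rw, Rd.ren]
      congr 1
      funext i
      exact ih i f σ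
  | vcomp P M Q ih1 ih2 =>
      simp only [rw, Rd.ren, ih1, ih2, Tm.sub_ren]

theorem ren_lw (M : Tm Sg) (Q : ℕ → Rd Sg R) (f : ℕ → ℕ) :
    (lw Q M).ren f = lw (fun n => (Q n).ren f) M := by
  induction M generalizing Q f with
  | var n => rfl
  | unit => rfl
  | pair M N ih1 ih2 => simp only [lw, Rd.ren, ih1, ih2]
  | fst M ih => simp only [lw, Rd.ren, ih]
  | snd M ih => simp only [lw, Rd.ren, ih]
  | lam A M ih =>
      simp only [lw, Rd.ren, ih]
      have e : (fun n => (Rd.liftRd Q n).ren (Tm.liftRen f)) = Rd.liftRd (fun k => (Q k).ren f) :=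
        funext fun n => Rd.liftRd_ren Q f n
      rw [e]
  | app M N ih1 ih2 => simp only [lw, Rd.ren, ih1, ih2]
  | const c a ih =>
      simp only [lw, Rd.ren]
      congr 1
      funext i
      exact ih i Q f

theorem lw_ren (M : Tm Sg) (f : ℕ → ℕ) (Q : ℕ → Rd Sg R) :
    lw Q (M.ren f) = lw (fun n => Q (f n)) M := by
  induction M generalizing Q f with
  | var n => rfl
  | unit => rfl
  | pair M N ih1 ih2 => simp only [lw, Tm.ren, ih1, ih2]
  | fst M ih => simp only [lw, Tm.ren, ih]
  | snd M ih => simp only [lw, Tm.ren, ih]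
  | lam A M ih =>
      simp only [lw, Tm.ren, ih]
      have e : (fun n => Rd.liftRd Q (Tm.liftRen f n)) = Rd.liftRd (fun k => Q (f k)) :=
        funext fun n => Rd.liftRd_liftRen Q f n
      rw [e]
  | app M N ih1 ih2 => simp only [lw, Tm.ren, ih1, ih2]
  | const c a ih =>
      simp only [lw, Tm.ren]
      congr 1
      funext i
      exact ih i f Q

end LwRw

section Renaming

/-- `f` is a context renaming from `Γ` to `Γ'`. -/
def Ok (f : ℕ → ℕ) (Γ Γ' : List (Ty S)) : Prop :=
  ∀ n (h : n < Γ.length), ∃ h' : f n < Γ'.length, Γ'.get ⟨f n, h'⟩ = Γ.get ⟨n, h⟩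

theorem Ok.lift {f : ℕ → ℕ} {Γ Γ' : List (Ty S)} (hf : Ok f Γ Γ') (A : Ty S) :
    Ok (Tm.liftRen f) (A :: Γ) (A :: Γ') := by
  intro n h
  cases n with
  | zero => exact ⟨Nat.succ_pos _, rfl⟩
  | succ n =>
      obtain ⟨h', e⟩ := hf n (Nat.lt_of_succ_lt_succ h)
      exact ⟨Nat.succ_lt_succ h', e⟩

theorem Ok.succ (Γ : List (Ty S)) (A : Ty S) : Ok Nat.succ Γ (A :: Γ) := by
  intro n h
  exact ⟨Nat.succ_lt_succ h, rfl⟩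

variable {Sg : Sig1 S}

theorem HasTy.ren {Γ : List (Ty S)} {M : Tm Sg} {A : Ty S}
    (hM : HasTy Sg Γ M A) :
    ∀ {Γ' : List (Ty S)} {f : ℕ → ℕ}, Ok f Γ Γ' → HasTy Sg Γ' (M.ren f) A := by
  induction hM with
  | @var Γ n h =>
      intro Γ' f hf
      obtain ⟨h', e⟩ := hf n h
      exact e ▸ HasTy.var h'
  | unit => exact fun _ => HasTy.unit
  | pair _ _ ih1 ih2 => exact fun hf => HasTy.pair (ih1 hf) (ih2 hf)
  | fst _ ih => exact fun hf => HasTy.fst (ih hf)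
  | snd _ ih => exact fun hf => HasTy.snd (ih hf)
  | @lam Γ M A B _ ih => exact fun hf => HasTy.lam (ih (hf.lift A))
  | app _ _ ih1 ih2 => exact fun hf => HasTy.app (ih1 hf) (ih2 hf)
  | const _ ih => exact fun hf => HasTy.const (fun i hi => ih i hi hf)

theorem Beq.ren {Γ : List (Ty S)} {M N : Tm Sg} {A : Ty S}
    (hB : Beq Sg Γ M N A) :
    ∀ {Γ' : List (Ty S)} {f : ℕ → ℕ}, Ok f Γ Γ' → Beq Sg Γ' (M.ren f) (N.ren f) A := by
  induction hB with
  | refl h => exact fun hf => Beq.refl (h.ren hf)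
  | symm _ ih => exact fun hf => Beq.symm (ih hf)
  | trans _ _ ih1 ih2 => exact fun hf => Beq.trans (ih1 hf) (ih2 hf)
  | pairCong _ _ ih1 ih2 => exact fun hf => Beq.pairCong (ih1 hf) (ih2 hf)
  | fstCong _ ih => exact fun hf => Beq.fstCong (ih hf)
  | sndCong _ ih => exact fun hf => Beq.sndCong (ih hf)
  | @lamCong Γ M M' A B _ ih => exact fun hf => Beq.lamCong (ih (hf.lift A))
  | appCong _ _ ih1 ih2 => exact fun hf => Beq.appCong (ih1 hf) (ih2 hf)
  | constCong _ ih => exact fun hf => Beq.constCong (fun i hi => ih i hi hf)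
  | @beta Γ M N A B hM hN =>
      intro Γ' f hf
      have := Beq.beta (hM.ren (hf.lift A)) (hN.ren hf)
      rw [Tm.ren_sub_cons]
      exact this
  | @eta Γ M A B hM =>
      intro Γ' f hf
      have H := Beq.eta (A := A) (hM.ren hf)
      have e : (M.ren f).ren Nat.succ = (M.ren Nat.succ).ren (Tm.liftRen f) := by
        rw [Tm.ren_ren, Tm.ren_ren]; rfl
      rw [e] at H
      exact H
  | prodBeta1 hM hN => exact fun hf => Beq.prodBeta1 (hM.ren hf) (hN.ren hf)
  | prodBeta2 hM hN => exact fun hf => Beq.prodBeta2 (hM.ren hf) (hN.ren hf)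
  | prodEta hM => exact fun hf => Beq.prodEta (hM.ren hf)
  | unitEta hM => exact fun hf => Beq.unitEta (hM.ren hf)

variable {X : Sig2 S}

theorem RdJ.ren {Γ : List (Ty S)} {P : Rd X.sig X.Rule} {M N : Tm X.sig} {A : Ty S}
    (hP : RdJ X Γ P M N A) :
    ∀ {Γ' : List (Ty S)} {f : ℕ → ℕ}, Ok f Γ Γ' →
      RdJ X Γ' (P.ren f) (M.ren f) (N.ren f) A := by
  induction hP with
  | @rule Γ r args Ms Ns _ ih =>
      intro Γ' f hf
      have H := RdJ.rule (X := X) (Γ := Γ') (r := r)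
        (args := fun i => (args i).ren f) (Ms := fun i => (Ms i).ren f)
        (Ns := fun i => (Ns i).ren f) (fun i hi => ih i hi hf)
      rw [Tm.ren_sub, Tm.ren_sub]
      exact H
  | vcomp _ _ ih1 ih2 => exact fun hf => RdJ.vcomp (ih1 hf) (ih2 hf)
  | @var Γ n h =>
      intro Γ' f hf
      obtain ⟨h', e⟩ := hf n h
      exact e ▸ RdJ.var h'
  | unit => exact fun _ => RdJ.unit
  | const _ ih => exact fun hf => RdJ.const (fun i hi => ih i hi hf)
  | @lam Γ P M N A B _ ih => exact fun hf => RdJ.lam (ih (hf.lift A))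
  | app _ _ ih1 ih2 => exact fun hf => RdJ.app (ih1 hf) (ih2 hf)
  | pair _ _ ih1 ih2 => exact fun hf => RdJ.pair (ih1 hf) (ih2 hf)
  | fst _ ih => exact fun hf => RdJ.fst (ih hf)
  | snd _ ih => exact fun hf => RdJ.snd (ih hf)
  | conv _ hM hN ih => exact fun hf => RdJ.conv (ih hf) (hM.ren hf) (hN.ren hf)

theorem rdSub_ren_beta (P : Rd X.sig X.Rule) (N : Tm X.sig) (M' : Tm X.sig)
    (Q : Rd X.sig X.Rule) (f : ℕ → ℕ) :
    (rdSub P (Tm.cons N .var) M' (Rd.consRd Q (fun n => .var n))).ren f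
      = rdSub (P.ren (Tm.liftRen f)) (Tm.cons (N.ren f) .var) (M'.ren (Tm.liftRen f))
          (Rd.consRd (Q.ren f) (fun n => .var n)) := by
  simp only [rdSub, Rd.ren]
  congr 1
  · rw [ren_rw, rw_ren]
    congr 1
    funext n
    cases n <;> rfl
  · exact Tm.ren_sub_cons M' N f
  · rw [ren_lw, lw_ren]
    congr 1
    funext n
    cases n <;> rfl

theorem PEq.ren {Γ : List (Ty S)} {P Q : Rd X.sig X.Rule} {M N : Tm X.sig} {A : Ty S}
    (hP : PEq X Γ P Q M N A) :
    ∀ {Γ' : List (Ty S)} {f : ℕ → ℕ}, Ok f Γ Γ' →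
      PEq X Γ' (P.ren f) (Q.ren f) (M.ren f) (N.ren f) A := by
  induction hP with
  | refl h => exact fun hf => PEq.refl (h.ren hf)
  | symm _ ih => exact fun hf => PEq.symm (ih hf)
  | trans _ _ ih1 ih2 => exact fun hf => PEq.trans (ih1 hf) (ih2 hf)
  | vcompCong _ _ ih1 ih2 => exact fun hf => PEq.vcompCong (ih1 hf) (ih2 hf)
  | @ruleCong Γ r P Q Ms Ns _ ih =>
      intro Γ' f hf
      have H := PEq.ruleCong (X := X) (Γ := Γ') (r := r)
        (P := fun i => (P i).ren f) (Q := fun i => (Q i).ren f)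
        (Ms := fun i => (Ms i).ren f) (Ns := fun i => (Ns i).ren f)
        (fun i hi => ih i hi hf)
      rw [Tm.ren_sub, Tm.ren_sub]
      exact H
  | constCong _ ih => exact fun hf => PEq.constCong (fun i hi => ih i hi hf)
  | @lamCong Γ P Q M N A B _ ih => exact fun hf => PEq.lamCong (ih (hf.lift A))
  | appCong _ _ ih1 ih2 => exact fun hf => PEq.appCong (ih1 hf) (ih2 hf)
  | pairCong _ _ ih1 ih2 => exact fun hf => PEq.pairCong (ih1 hf) (ih2 hf)
  | fstCong _ ih => exact fun hf => PEq.fstCong (ih hf)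
  | sndCong _ ih => exact fun hf => PEq.sndCong (ih hf)
  | assoc h1 h2 h3 => exact fun hf => PEq.assoc (h1.ren hf) (h2.ren hf) (h3.ren hf)
  | unitR h =>
      intro Γ' f hf
      have H := PEq.unitR (h.ren hf)
      simp only [Rd.ren, Rd.toRd_ren]
      exact H
  | unitL h =>
      intro Γ' f hf
      have H := PEq.unitL (h.ren hf)
      simp only [Rd.ren, Rd.toRd_ren]
      exact H
  | @beta Γ P Q M M' N N' A B hP hQ =>
      intro Γ' f hf
      have H := PEq.beta (hP.ren (hf.lift A)) (hQ.ren hf)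
      rw [rdSub_ren_beta, Tm.ren_sub_cons]
      exact H
  | @eta Γ P M N A B h =>
      intro Γ' f hf
      have H := PEq.eta (A := A) (h.ren hf)
      have e : (P.ren f).ren Nat.succ = (P.ren Nat.succ).ren (Tm.liftRen f) := by
        rw [Rd.ren_ren, Rd.ren_ren]; rfl
      rw [e] at H
      exact H
  | fstPair h1 h2 => exact fun hf => PEq.fstPair (h1.ren hf) (h2.ren hf)
  | sndPair h1 h2 => exact fun hf => PEq.sndPair (h1.ren hf) (h2.ren hf)
  | pairEta h => exact fun hf => PEq.pairEta (h.ren hf)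
  | unitEta h => exact fun hf => PEq.unitEta (h.ren hf)
  | @ruleLift1 Δ r P Q N₁ N₂ N₃ hP hQ =>
      intro Γ' f hf
      have H := PEq.ruleLift1 (X := X) (Δ := Γ') (r := r)
        (P := fun i => (P i).ren f) (Q := fun i => (Q i).ren f)
        (N₁ := fun i => (N₁ i).ren f) (N₂ := fun i => (N₂ i).ren f)
        (N₃ := fun i => (N₃ i).ren f)
        (fun i hi => (hP i hi).ren hf) (fun i hi => (hQ i hi).ren hf)
      simp only [Rd.ren, ren_lw, Tm.ren_sub]
      exact H
  | @ruleLift2 Δ r P Q N₁ N₂ N₃ hP hQ =>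
      intro Γ' f hf
      have H := PEq.ruleLift2 (X := X) (Δ := Γ') (r := r)
        (P := fun i => (P i).ren f) (Q := fun i => (Q i).ren f)
        (N₁ := fun i => (N₁ i).ren f) (N₂ := fun i => (N₂ i).ren f)
        (N₃ := fun i => (N₃ i).ren f)
        (fun i hi => (hP i hi).ren hf) (fun i hi => (hQ i hi).ren hf)
      simp only [Rd.ren, ren_lw, Tm.ren_sub]
      exact H
  | constLift hP hQ =>
      exact fun hf => PEq.constLift (fun i hi => (hP i hi).ren hf)
        (fun i hi => (hQ i hi).ren hf)
  | @lamLift Γ P Q M₁ M₂ M₃ A B hP hQ =>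
      exact fun hf => PEq.lamLift (hP.ren (hf.lift A)) (hQ.ren (hf.lift A))
  | appLift h1 h2 h3 h4 =>
      exact fun hf => PEq.appLift (h1.ren hf) (h2.ren hf) (h3.ren hf) (h4.ren hf)
  | pairLift h1 h2 h3 h4 =>
      exact fun hf => PEq.pairLift (h1.ren hf) (h2.ren hf) (h3.ren hf) (h4.ren hf)
  | fstLift h1 h2 => exact fun hf => PEq.fstLift (h1.ren hf) (h2.ren hf)
  | sndLift h1 h2 => exact fun hf => PEq.sndLift (h1.ren hf) (h2.ren hf)
  | conv _ hM hN ih => exact fun hf => PEq.conv (ih hf) (hM.ren hf) (hN.ren hf)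

end Renaming

section Lifting

variable {X : Sig2 S}

theorem toRdTy {Γ : List (Ty S)} {M : Tm X.sig} {A : Ty S}
    (hM : HasTy X.sig Γ M A) : RdJ X Γ (Rd.toRd M) M M A := by
  induction hM with
  | var h => exact RdJ.var h
  | unit => exact RdJ.unit
  | pair _ _ ih1 ih2 => exact RdJ.pair ih1 ih2
  | fst _ ih => exact RdJ.fst ih
  | snd _ ih => exact RdJ.snd ih
  | lam _ ih => exact RdJ.lam ih
  | app _ _ ih1 ih2 => exact RdJ.app ih1 ih2
  | const _ ih => exact RdJ.const ih

theorem liftRdJ {Γ Δ : List (Ty S)} {P : ℕ → Rd X.sig X.Rule}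
    {M₁ M₂ : ℕ → Tm X.sig} (A : Ty S)
    (hP : ∀ i (hi : i < Δ.length), RdJ X Γ (P i) (M₁ i) (M₂ i) (Δ.get ⟨i, hi⟩)) :
    ∀ i (hi : i < (A :: Δ).length),
      RdJ X (A :: Γ) (Rd.liftRd P i) (Tm.liftSub M₁ i) (Tm.liftSub M₂ i)
        ((A :: Δ).get ⟨i, hi⟩) := by
  intro i hi
  cases i with
  | zero => exact RdJ.var (show 0 < (A :: Γ).length from Nat.succ_pos _)
  | succ i => exact (hP i (Nat.lt_of_succ_lt_succ hi)).ren (Ok.succ Γ A)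

theorem lwTy {Δ : List (Ty S)} {Nt : Tm X.sig} {A : Ty S}
    (hN : HasTy X.sig Δ Nt A) :
    ∀ {Γ : List (Ty S)} {Q : ℕ → Rd X.sig X.Rule} {Ms Ns : ℕ → Tm X.sig},
      (∀ i (hi : i < Δ.length), RdJ X Γ (Q i) (Ms i) (Ns i) (Δ.get ⟨i, hi⟩)) →
      RdJ X Γ (lw Q Nt) (Nt.sub Ms) (Nt.sub Ns) A := by
  induction hN with
  | var h => exact fun hQ => hQ _ h
  | unit => exact fun _ => RdJ.unit
  | pair _ _ ih1 ih2 => exact fun hQ => RdJ.pair (ih1 hQ) (ih2 hQ)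
  | fst _ ih => exact fun hQ => RdJ.fst (ih hQ)
  | snd _ ih => exact fun hQ => RdJ.snd (ih hQ)
  | @lam Δ M A B _ ih => exact fun hQ => RdJ.lam (ih (liftRdJ A hQ))
  | app _ _ ih1 ih2 => exact fun hQ => RdJ.app (ih1 hQ) (ih2 hQ)
  | const _ ih => exact fun hQ => RdJ.const (fun i hi => ih i hi hQ)

theorem lwLift {Δ : List (Ty S)} {Nt : Tm X.sig} {A : Ty S}
    (hN : HasTy X.sig Δ Nt A) :
    ∀ {Γ : List (Ty S)} {Rt P Q : ℕ → Rd X.sig X.Rule} {M₁ M₂ M₃ : ℕ → Tm X.sig},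
      (∀ i (hi : i < Δ.length),
        PEq X Γ (Rt i) (.vcomp (P i) (M₂ i) (Q i)) (M₁ i) (M₃ i) (Δ.get ⟨i, hi⟩)) →
      (∀ i (hi : i < Δ.length), RdJ X Γ (P i) (M₁ i) (M₂ i) (Δ.get ⟨i, hi⟩)) →
      (∀ i (hi : i < Δ.length), RdJ X Γ (Q i) (M₂ i) (M₃ i) (Δ.get ⟨i, hi⟩)) →
      PEq X Γ (lw Rt Nt) (.vcomp (lw P Nt) (Nt.sub M₂) (lw Q Nt))
        (Nt.sub M₁) (Nt.sub M₃) A := by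
  induction hN with
  | var h => exact fun hR _ _ => hR _ h
  | unit => exact fun _ _ _ => PEq.symm (PEq.unitL RdJ.unit)
  | pair _ _ ih1 ih2 =>
      intro Γ Rt P Q M₁ M₂ M₃ hR hP hQ
      exact PEq.trans (PEq.pairCong (ih1 hR hP hQ) (ih2 hR hP hQ))
        (PEq.pairLift (lwTy ‹_› hP) (lwTy ‹_› hQ) (lwTy ‹_› hP) (lwTy ‹_› hQ))
  | fst hNty ih =>
      intro Γ Rt P Q M₁ M₂ M₃ hR hP hQ
      exact PEq.trans (PEq.fstCong (ih hR hP hQ))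
        (PEq.fstLift (lwTy hNty hP) (lwTy hNty hQ))
  | snd hNty ih =>
      intro Γ Rt P Q M₁ M₂ M₃ hR hP hQ
      exact PEq.trans (PEq.sndCong (ih hR hP hQ))
        (PEq.sndLift (lwTy hNty hP) (lwTy hNty hQ))
  | @lam Δ M A B hNty ih =>
      intro Γ Rt P Q M₁ M₂ M₃ hR hP hQ
      have hR' : ∀ i (hi : i < (A :: Δ).length),
          PEq X (A :: Γ) (Rd.liftRd Rt i)
            (.vcomp (Rd.liftRd P i) (Tm.liftSub M₂ i) (Rd.liftRd Q i))
            (Tm.liftSub M₁ i) (Tm.liftSub M₃ i) ((A :: Δ).get ⟨i, hi⟩) := by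
        intro i hi
        cases i with
        | zero => exact PEq.symm (PEq.unitL (RdJ.var (show 0 < (A :: Γ).length from Nat.succ_pos _)))
        | succ i => exact (hR i (Nat.lt_of_succ_lt_succ hi)).ren (Ok.succ Γ A)
      exact PEq.trans (PEq.lamCong (ih hR' (liftRdJ A hP) (liftRdJ A hQ)))
        (PEq.lamLift (lwTy hNty (liftRdJ A hP)) (lwTy hNty (liftRdJ A hQ)))
  | app hf ha ih1 ih2 =>
      intro Γ Rt P Q M₁ M₂ M₃ hR hP hQ
      exact PEq.trans (PEq.appCong (ih1 hR hP hQ) (ih2 hR hP hQ))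
        (PEq.appLift (lwTy hf hP) (lwTy hf hQ) (lwTy ha hP) (lwTy ha hQ))
  | const hargs ih =>
      intro Γ Rt P Q M₁ M₂ M₃ hR hP hQ
      exact PEq.trans (PEq.constCong (fun i hi => ih i hi hR hP hQ))
        (PEq.constLift (fun i hi => lwTy (hargs i hi) hP)
          (fun i hi => lwTy (hargs i hi) hQ))

end Lifting

/-- Left whiskering by a fixed 1-cell is functorial in `F(X,h)`: for
composable 2-cells `α : M ⟶ M'` and `β : M' ⟶ M'' : A → B` and a 1-cell
`N : B → C`, `(id_N ∘ α) ; (id_N ∘ β) = id_N ∘ (α ; β)`. -/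
theorem left_whiskering_functorial (X : Sig2 S)
    (h : List (Ty S) → Rd X.sig X.Rule → X.Rule)
    -- h respects permutation equivalence
    (hPEq : ∀ Γ P Q M N A, PEq X Γ P Q M N A → h Γ P = h Γ Q)
    -- the algebra law h ∘ L(h) = h ∘ μ
    (hAlg : ∀ Γ (T : Rd X.sig (LRule X)),
      h Γ (Rd.mapRule (fun R₀ => h R₀.ctx R₀.red) T) = h Γ (mu X T))
    -- the algebra law h ∘ η = id
    (hEta : ∀ r : X.Rule, h (X.ruleCtx r) (etaRd X r) = r)
    -- rules of X are well-typed
    (hwt : ∀ r : X.Rule, HasTy X.sig (X.ruleCtx r) (X.lhs r) (X.ruleTy r) ∧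
      HasTy X.sig (X.ruleCtx r) (X.rhs r) (X.ruleTy r))
    -- 2-cells α : M ⟶ M' and β : M' ⟶ M'' : A → B
    {A B C : Ty S} (α β : X.Rule) (M M' M'' : Tm X.sig)
    (hαc : X.ruleCtx α = [A]) (hαt : X.ruleTy α = B)
    (hαl : X.lhs α = M) (hαr : X.rhs α = M')
    (hβc : X.ruleCtx β = [A]) (hβt : X.ruleTy β = B)
    (hβl : X.lhs β = M') (hβr : X.rhs β = M'')
    -- a 1-cell N : B → C
    (N : Tm X.sig) (hN : HasTy X.sig [B] N C) :
    h [A] (.vcomp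
        (etaRd X (h [A] (.rule (h [B] (Rd.toRd N)) (fun _ => etaRd X α))))
        (N.sub (fun _ => M'))
        (etaRd X (h [A] (.rule (h [B] (Rd.toRd N)) (fun _ => etaRd X β))))) =
      h [A] (.rule (h [B] (Rd.toRd N))
        (fun _ => etaRd X (h [A] (.vcomp (etaRd X α) M' (etaRd X β))))) := by
  classical
  -- well-typedness of the endpoints
  have hM : HasTy X.sig [A] M B := by
    have H := (hwt α).1; rwa [hαc, hαl, hαt] at H
  have hM' : HasTy X.sig [A] M' B := by
    have H := (hwt α).2; rwa [hαc, hαr, hαt] at H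
  have hM'' : HasTy X.sig [A] M'' B := by
    have H := (hwt β).2; rwa [hβc, hβr, hβt] at H
  -- typing of the unit reductions
  have Jα : RdJ X [A] (etaRd X α) M M' B := by
    have H := RdJ.rule (X := X) (Γ := X.ruleCtx α) (r := α)
      (args := fun i => .var i) (Ms := Tm.var) (Ns := Tm.var)
      (fun i hi => RdJ.var hi)
    rw [Tm.sub_id, Tm.sub_id, hαl, hαr] at H
    rw [hαc, hαt] at H
    exact H
  have Jβ : RdJ X [A] (etaRd X β) M' M'' B := by
    have H := RdJ.rule (X := X) (Γ := X.ruleCtx β) (r := β)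
      (args := fun i => .var i) (Ms := Tm.var) (Ns := Tm.var)
      (fun i hi => RdJ.var hi)
    rw [Tm.sub_id, Tm.sub_id, hβl, hβr] at H
    rw [hβc, hβt] at H
    exact H
  -- singleton-context tuples
  have tup : ∀ {P0 : Rd X.sig X.Rule} {Ma Mb : Tm X.sig}, RdJ X [A] P0 Ma Mb B →
      ∀ i (hi : i < ([B] : List (Ty S)).length),
        RdJ X [A] P0 Ma Mb (([B] : List (Ty S)).get ⟨i, hi⟩) := by
    intro P0 Ma Mb J i hi
    cases i with
    | zero => exact J
    | succ i => exact absurd hi (by simp)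
  -- the three composite 2-cells, as reductions
  set Qa : Rd X.sig X.Rule := .vcomp (etaRd X α) M' (Rd.toRd M') with hQa
  set Qb : Rd X.sig X.Rule := .vcomp (etaRd X β) M'' (Rd.toRd M'') with hQb
  set Qc : Rd X.sig X.Rule :=
    .vcomp (.vcomp (etaRd X α) M' (etaRd X β)) M'' (Rd.toRd M'') with hQc
  have JQa : RdJ X [A] Qa M M' B := RdJ.vcomp Jα (toRdTy hM')
  have JQb : RdJ X [A] Qb M' M'' B := RdJ.vcomp Jβ (toRdTy hM'')
  have JQc : RdJ X [A] Qc M M'' B :=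
    RdJ.vcomp (RdJ.vcomp Jα Jβ) (toRdTy hM'')
  have Jlwa : RdJ X [A] (lw (fun _ => Qa) N)
      (N.sub fun _ => M) (N.sub fun _ => M') C := lwTy hN (fun i hi => tup JQa i hi)
  have Jlwb : RdJ X [A] (lw (fun _ => Qb) N)
      (N.sub fun _ => M') (N.sub fun _ => M'') C := lwTy hN (fun i hi => tup JQb i hi)
  have Jlwc : RdJ X [A] (lw (fun _ => Qc) N)
      (N.sub fun _ => M) (N.sub fun _ => M'') C := lwTy hN (fun i hi => tup JQc i hi)
  -- key computation: whiskering a rule application by N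
  have key : ∀ (P0 : Rd X.sig X.Rule) (Msrc Mtgt : Tm X.sig),
      RdJ X [A] (Rd.vcomp P0 Mtgt (Rd.toRd Mtgt)) Msrc Mtgt B →
      srcRd X P0 = Msrc →
      h [A] (.rule (h [B] (Rd.toRd N)) (fun _ => etaRd X (h [A] P0)))
        = h [A] (lw (fun _ => Rd.vcomp P0 Mtgt (Rd.toRd Mtgt)) N) := by
    intro P0 Msrc Mtgt J0 hsrc
    have e1 : (.rule (h [B] (Rd.toRd N)) (fun _ => etaRd X (h [A] P0)) :
          Rd X.sig X.Rule)
        = Rd.mapRule (fun R₀ => h R₀.ctx R₀.red)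
            (.rule (⟨[B], Rd.toRd N, N, N, C⟩ : LRule X)
              (fun _ => .rule (⟨[A], P0, Msrc, Mtgt, B⟩ : LRule X)
                (fun j => .var j))) := rfl
    rw [e1, hAlg]
    have e2 : mu X (.rule (⟨[B], Rd.toRd N, N, N, C⟩ : LRule X)
          (fun _ => .rule (⟨[A], P0, Msrc, Mtgt, B⟩ : LRule X) (fun j => .var j)))
        = .vcomp (Rd.toRd (N.sub (fun _ => Msrc))) (N.sub (fun _ => Msrc))
            (lw (fun _ => Rd.vcomp P0 Mtgt (Rd.toRd Mtgt)) N) := by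
      simp only [mu, rdSub, srcRd, rw_id, Tm.sub_id, lw_var, rw_toRd, hsrc]
    rw [e2]
    exact hPEq _ _ _ _ _ _ (PEq.unitL (lwTy hN (fun i hi => tup J0 i hi)))
  -- source computations
  have hsα : srcRd X (etaRd X α) = M := by
    show (X.lhs α).sub (fun i => srcRd X (.var i)) = M
    rw [show (fun i => srcRd X (.var i : Rd X.sig X.Rule)) = Tm.var from rfl,
      Tm.sub_id, hαl]
  have hsβ : srcRd X (etaRd X β) = M' := by
    show (X.lhs β).sub (fun i => srcRd X (.var i)) = M'
    rw [show (fun i => srcRd X (.var i : Rd X.sig X.Rule)) = Tm.var from rfl,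
      Tm.sub_id, hβl]
  -- identity of rules under h ∘ η
  have hα0 : h [A] (etaRd X α) = α := by
    have H := hEta α; rwa [hαc] at H
  have hβ0 : h [A] (etaRd X β) = β := by
    have H := hEta β; rwa [hβc] at H
  -- the three instances of the key computation
  have stepA := key (etaRd X α) M M' JQa hsα
  rw [hα0] at stepA
  have stepB := key (etaRd X β) M' M'' JQb hsβ
  rw [hβ0] at stepB
  have stepC := key (.vcomp (etaRd X α) M' (etaRd X β)) M M'' JQc hsα
  -- the composite of the two whiskered cells
  have hRtup : ∀ i (hi : i < ([B] : List (Ty S)).length),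
      PEq X [A] Qc (.vcomp Qa M' Qb) M M'' (([B] : List (Ty S)).get ⟨i, hi⟩) := by
    intro i hi
    cases i with
    | zero =>
        exact PEq.trans (PEq.unitR (RdJ.vcomp Jα Jβ))
          (PEq.symm (PEq.vcompCong (PEq.unitR Jα) (PEq.unitR Jβ)))
    | succ i => exact absurd hi (by simp)
  calc
    h [A] (.vcomp
        (etaRd X (h [A] (.rule (h [B] (Rd.toRd N)) (fun _ => etaRd X α))))
        (N.sub (fun _ => M'))
        (etaRd X (h [A] (.rule (h [B] (Rd.toRd N)) (fun _ => etaRd X β)))))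
      = h [A] (Rd.mapRule (fun R₀ => h R₀.ctx R₀.red)
          (.vcomp
            (.rule (⟨[A], lw (fun _ => Qa) N, N.sub (fun _ => M),
               N.sub (fun _ => M'), C⟩ : LRule X) (fun i => .var i))
            (N.sub (fun _ => M'))
            (.rule (⟨[A], lw (fun _ => Qb) N, N.sub (fun _ => M'),
               N.sub (fun _ => M''), C⟩ : LRule X) (fun i => .var i)))) := by
            rw [stepA, stepB]; rfl
    _ = h [A] (mu X
          (.vcomp
            (.rule (⟨[A], lw (fun _ => Qa) N, N.sub (fun _ => M),
               N.sub (fun _ => M'), C⟩ : LRule X) (fun i => .var i))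
            (N.sub (fun _ => M'))
            (.rule (⟨[A], lw (fun _ => Qb) N, N.sub (fun _ => M'),
               N.sub (fun _ => M''), C⟩ : LRule X) (fun i => .var i)))) := hAlg _ _
    _ = h [A] (.vcomp
          (.vcomp (lw (fun _ => Qa) N) (N.sub (fun _ => M'))
            (Rd.toRd (N.sub (fun _ => M'))))
          (N.sub (fun _ => M'))
          (.vcomp (lw (fun _ => Qb) N) (N.sub (fun _ => M''))
            (Rd.toRd (N.sub (fun _ => M''))))) := by
            congr 1
            simp only [mu, rdSub, srcRd, rw_id, Tm.sub_id, lw_var]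
    _ = h [A] (.vcomp (lw (fun _ => Qa) N) (N.sub (fun _ => M'))
          (lw (fun _ => Qb) N)) :=
        hPEq _ _ _ _ _ _ (PEq.vcompCong (PEq.unitR Jlwa) (PEq.unitR Jlwb))
    _ = h [A] (lw (fun _ => Qc) N) :=
        (hPEq _ _ _ _ _ _ (lwLift hN hRtup (fun i hi => tup JQa i hi)
          (fun i hi => tup JQb i hi))).symm
    _ = h [A] (.rule (h [B] (Rd.toRd N))
        (fun _ => etaRd X (h [A] (.vcomp (etaRd X α) M' (etaRd X β))))) :=
        stepC.symm
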